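/- Let h > 0, ρ = h + √(1+h²), and k ∈ ℕ_0^d a nonzero multi-index. Define c_j = k_j/‖k‖_2 and ρ̂_j = c_j h + √(1+(c_j h)²). Then ∏_{j=1}^d ρ̂_j^{k_j + 1} ≥ ρ^{‖k‖_2 + 1}. -/
import Mathlib

open Real

lemma sinh_convexOn_Ici : ConvexOn ℝ (Set.Ici (0:ℝ)) Real.sinh := by
  apply convexOn_of_deriv2_nonneg (convex_Ici 0) Real.continuous_sinh.continuousOn
    Real.differentiable_sinh.differentiableOn
  · rw [Real.deriv_sinh]
    exact Real.differentiable_cosh.differentiableOn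
  · intro x hx
    have : deriv^[2] Real.sinh = Real.sinh := by
      simp [Function.iterate_succ, Real.deriv_sinh, Real.deriv_cosh]
    rw [this]
    rw [interior_Ici] at hx
    exact (Real.sinh_pos_iff.2 hx).le

lemma mul_arsinh_le {c x : ℝ} (hc0 : 0 ≤ c) (hc1 : c ≤ 1) (hx : 0 ≤ x) :
    c * Real.arsinh x ≤ Real.arsinh (c * x) := by
  have ha : 0 ≤ Real.arsinh x := by
    rw [← Real.arsinh_zero]; exact Real.arsinh_le_arsinh.2 hx
  have hsinh : Real.sinh (c * Real.arsinh x) ≤ c * x := by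
    have := sinh_convexOn_Ici.2 (Set.self_mem_Ici) (Set.mem_Ici.2 ha)
      (by linarith : (0:ℝ) ≤ 1 - c) hc0 (by ring)
    simpa [Real.sinh_arsinh] using this
  calc c * Real.arsinh x = Real.arsinh (Real.sinh (c * Real.arsinh x)) := by
        rw [Real.arsinh_sinh]
    _ ≤ Real.arsinh (c * x) := Real.arsinh_le_arsinh.2 hsinh

open Finset in
theorem rhohat_prod_ge_succ (d : ℕ) (k : Fin d → ℕ) (hk : k ≠ 0) (h : ℝ) (hh : 0 < h)
    (ρ : ℝ) (hρ : ρ = h + Real.sqrt (1 + h ^ 2))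
    (nk : ℝ) (hnk : nk = Real.sqrt (∑ j, (k j : ℝ) ^ 2))
    (c : Fin d → ℝ) (hc : ∀ j, c j = (k j : ℝ) / nk)
    (ρhat : Fin d → ℝ) (hρhat : ∀ j, ρhat j = c j * h + Real.sqrt (1 + (c j * h) ^ 2)) :
    ρ ^ (nk + 1) ≤ ∏ j, ρhat j ^ (k j + 1 : ℕ) := by
  -- basic positivity
  have hsum : (0:ℝ) < ∑ j, (k j : ℝ) ^ 2 := by
    obtain ⟨j, hj⟩ : ∃ j, k j ≠ 0 := by
      by_contra hcon
      push_neg at hcon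
      exact hk (funext fun j => hcon j)
    apply Finset.sum_pos' (fun i _ => by positivity)
    exact ⟨j, Finset.mem_univ j, by positivity⟩
  have hnk0 : 0 < nk := by rw [hnk]; exact Real.sqrt_pos.2 hsum
  have hnksq : nk ^ 2 = ∑ j, (k j : ℝ) ^ 2 := by
    rw [hnk, Real.sq_sqrt hsum.le]
  have hc0 : ∀ j, 0 ≤ c j := fun j => by rw [hc]; positivity
  have hc1 : ∀ j, c j ≤ 1 := by
    intro j
    rw [hc, div_le_one hnk0, hnk]
    calc (k j : ℝ) = Real.sqrt ((k j : ℝ)^2) := by rw [Real.sqrt_sq (by positivity)]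
      _ ≤ Real.sqrt (∑ i, (k i : ℝ)^2) := by
          apply Real.sqrt_le_sqrt
          exact Finset.single_le_sum (f := fun i => (k i : ℝ)^2) (fun i _ => by positivity) (Finset.mem_univ j)
  -- express things as exp ∘ arsinh
  have hρexp : ρ = Real.exp (Real.arsinh h) := by rw [hρ, Real.exp_arsinh]
  have hρhatexp : ∀ j, ρhat j = Real.exp (Real.arsinh (c j * h)) := fun j => by
    rw [hρhat, Real.exp_arsinh]
  have ha0 : 0 ≤ Real.arsinh h := by
    rw [← Real.arsinh_zero]; exact Real.arsinh_le_arsinh.2 hh.le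
  set a := Real.arsinh h with ha
  -- product as exp of a sum
  have hprod : ∏ j, ρhat j ^ (k j + 1 : ℕ)
      = Real.exp (∑ j, ((k j : ℝ) + 1) * Real.arsinh (c j * h)) := by
    rw [Real.exp_sum]
    apply Finset.prod_congr rfl
    intro j _
    rw [hρhatexp j, ← Real.exp_nat_mul]
    congr 1
    push_cast
    ring
  have hlhs : ρ ^ (nk + 1) = Real.exp ((nk + 1) * a) := by
    rw [hρexp, ← Real.exp_mul, mul_comm]
  rw [hprod, hlhs, Real.exp_le_exp]
  -- key pointwise bound
  have hkey : ∀ j, ((k j : ℝ) + 1) * (c j * a) ≤ ((k j : ℝ) + 1) * Real.arsinh (c j * h) := by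
    intro j
    apply mul_le_mul_of_nonneg_left _ (by positivity)
    exact mul_arsinh_le (hc0 j) (hc1 j) hh.le
  calc (nk + 1) * a ≤ (∑ j, ((k j : ℝ) + 1) * c j) * a := by
        apply mul_le_mul_of_nonneg_right _ ha0
        have hsum1 : ∑ j, ((k j : ℝ) + 1) * c j = nk + (∑ j, (k j : ℝ)) / nk := by
          have heach : ∀ j, ((k j : ℝ) + 1) * c j = (k j : ℝ)^2/nk + (k j : ℝ)/nk := by
            intro j
            rw [hc]
            field_simp
          rw [Finset.sum_congr rfl (fun j _ => heach j), Finset.sum_add_distrib,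
            ← Finset.sum_div, ← Finset.sum_div, ← hnksq, pow_two, mul_div_assoc,
            div_self hnk0.ne', mul_one]
        rw [hsum1]
        have h1le : 1 ≤ (∑ j, (k j : ℝ)) / nk := by
          rw [le_div_iff₀ hnk0, one_mul, hnk]
          have hsq := Finset.sum_sq_le_sq_sum_of_nonneg
            (s := Finset.univ) (f := fun j => (k j : ℝ)) (fun i _ => by positivity)
          calc Real.sqrt (∑ j, (k j:ℝ)^2) ≤ Real.sqrt ((∑ j, (k j:ℝ))^2) :=
                Real.sqrt_le_sqrt hsq
            _ = ∑ j, (k j:ℝ) := Real.sqrt_sq (by positivity)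
        linarith
    _ = ∑ j, ((k j : ℝ) + 1) * (c j * a) := by
        rw [Finset.sum_mul]
        apply Finset.sum_congr rfl
        intro j _
        ring
    _ ≤ ∑ j, ((k j : ℝ) + 1) * Real.arsinh (c j * h) :=
        Finset.sum_le_sum fun j _ => hkey j
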